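/- Let 𝒢 = (V, A) be an ordering relations graph. For every vertex v ∈ V, the element [v] of ℒ[𝒢] = (H, ⊆) is a complete prime: for every subset X ⊆ H that has a least upper bound ⊔X in (H, ⊆), if [v] ⊆ ⊔X then there exists x ∈ X with [v] ⊆ x. -/

import Mathlib

/-! If `v` lay in no member of `X`, then cutting out of `⊔X` every vertex `w` with `v ∈ [w]`
would leave a left-closed conflict-free set that is still an upper bound of `X` (each member of `X`,
being left-closed, avoids those `w`), yet it misses `v ∈ [v] ⊆ ⊔X`. Hence `v` lies in some member
of `X`, and by left-closedness so does all of `[v]`. -/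

open Relation

/-- A subset `W` of vertices is conflict-free w.r.t. the arc relation `A`. -/
def ConflictFree {V : Type*} (A : V → V → Prop) (W : Set V) : Prop :=
  ∀ v₁ ∈ W, ∀ v₂ ∈ W, ¬ A v₁ v₂ ∨ ¬ A v₂ v₁

/-- A subset `W` of vertices is left-closed w.r.t. the arc relation `A`. -/
def LeftClosed {V : Type*} (A : V → V → Prop) (W : Set V) : Prop :=
  ∀ v₁ ∈ W, ∀ v₂ : V, A v₂ v₁ → ¬ A v₁ v₂ → v₂ ∈ W

/-- `H` : the set of left-closed conflict-free subsets of vertices; ordered by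
inclusion (via the subtype order) this is the poset `ℒ[𝒢]`. -/
def OrgH {V : Type*} (A : V → V → Prop) : Set (Set V) :=
  {W | LeftClosed A W ∧ ConflictFree A W}

/-- `[v] = {v' | (v',v) ∈ B*}` where `B = {(x,y) ∈ A | (y,x) ∉ A}`. -/
def primeOf {V : Type*} (A : V → V → Prop) (v : V) : Set V :=
  {v' | ReflTransGen (fun x y => A x y ∧ ¬ A y x) v' v}

/-- Two elements of a poset are consistent iff they have a common upper bound. -/
def Consistent {D : Type*} [PartialOrder D] (x y : D) : Prop :=
  ∃ z : D, x ≤ z ∧ y ≤ z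

/-- A subset of a poset is pairwise consistent. -/
def PairwiseConsistent {D : Type*} [PartialOrder D] (X : Set D) : Prop :=
  ∀ x ∈ X, ∀ y ∈ X, Consistent x y

/-- A poset is coherent iff every pairwise consistent subset has a least upper bound. -/
def Coherent (D : Type*) [PartialOrder D] : Prop :=
  ∀ X : Set D, PairwiseConsistent X → ∃ l : D, IsLUB X l

/-- An element `p` is a complete prime iff whenever a subset has a least upper
bound above `p`, then `p` lies below some member of the subset. -/
def CompletePrime {D : Type*} [PartialOrder D] (p : D) : Prop :=
  ∀ (X : Set D) (l : D), IsLUB X l → p ≤ l → ∃ y ∈ X, p ≤ y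

/-- A poset is prime algebraic iff its complete primes form a denumerable set and
every element is the least upper bound of the complete primes below it. -/
def PrimeAlgebraic (D : Type*) [PartialOrder D] : Prop :=
  {p : D | CompletePrime p}.Countable ∧
  ∀ x : D, IsLUB {p : D | CompletePrime p ∧ p ≤ x} x

lemma ConflictFree.mono {V : Type*} {A : V → V → Prop} {W W' : Set V}
    (hW : ConflictFree A W) (h : W' ⊆ W) : ConflictFree A W' :=
  fun v₁ h₁ v₂ h₂ => hW v₁ (h h₁) v₂ (h h₂)

lemma LeftClosed.inter {V : Type*} {A : V → V → Prop} {W W' : Set V}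
    (hW : LeftClosed A W) (hW' : LeftClosed A W') : LeftClosed A (W ∩ W') :=
  fun v₁ h₁ v₂ ha hna => ⟨hW v₁ h₁.1 v₂ ha hna, hW' v₁ h₁.2 v₂ ha hna⟩

lemma LeftClosed.primeOf_subset {V : Type*} {A : V → V → Prop} {W : Set V}
    (hW : LeftClosed A W) {v : V} (hv : v ∈ W) : primeOf A v ⊆ W := by
  intro u hu
  induction hu using ReflTransGen.head_induction_on with
  | refl => exact hv
  | head hb _ ih => exact hW _ ih _ hb.1 hb.2

lemma mem_primeOf_self {V : Type*} (A : V → V → Prop) (v : V) : v ∈ primeOf A v :=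
  ReflTransGen.refl

lemma leftClosed_setOf_notMem_primeOf {V : Type*} (A : V → V → Prop) (v : V) :
    LeftClosed A {w | v ∉ primeOf A w} :=
  fun _ hw₁ _ ha hna hw₂ => hw₁ (ReflTransGen.tail hw₂ ⟨ha, hna⟩)

lemma inter_setOf_notMem_primeOf_mem_orgH {V : Type*} {A : V → V → Prop} {W : Set V}
    (hW : W ∈ OrgH A) (v : V) : W ∩ {w | v ∉ primeOf A w} ∈ OrgH A :=
  ⟨hW.1.inter (leftClosed_setOf_notMem_primeOf A v), hW.2.mono Set.inter_subset_left⟩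

lemma exists_mem_of_mem_isLUB {V : Type*} {A : V → V → Prop} {X : Set (OrgH A)}
    {l : OrgH A} (hl : IsLUB X l) {v : V} (hv : v ∈ (l : Set V)) :
    ∃ x ∈ X, v ∈ (x : Set V) := by
  by_contra! hX
  let l' : OrgH A := ⟨_, inter_setOf_notMem_primeOf_mem_orgH l.2 v⟩
  have hub : l' ∈ upperBounds X := fun x hx w hw =>
    ⟨hl.1 hx hw, fun hvw => hX x hx (x.2.1.primeOf_subset hw hvw)⟩
  exact (hl.2 hub hv).2 (mem_primeOf_self A v)

theorem stmt4_general {V : Type*} (A : V → V → Prop) (v : V) :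
    ∀ (X : Set ↥(OrgH A)) (l : ↥(OrgH A)), IsLUB X l →
      primeOf A v ⊆ (l : Set V) → ∃ x ∈ X, primeOf A v ⊆ (x : Set V) := by
  intro X l hl hsub
  obtain ⟨x, hx, hvx⟩ := exists_mem_of_mem_isLUB hl (hsub (mem_primeOf_self A v))
  exact ⟨x, hx, x.2.1.primeOf_subset hvx⟩

/-- For every vertex `v`, the element `[v]` of `ℒ[𝒢] = (H, ⊆)`
is a complete prime: for every subset `X ⊆ H` having a least upper bound `l`,
if `[v] ⊆ l` then `[v] ⊆ x` for some `x ∈ X`. -/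
theorem stmt4 {V : Type*} [Finite V] (A : V → V → Prop) (v : V) :
    ∀ (X : Set ↥(OrgH A)) (l : ↥(OrgH A)), IsLUB X l →
      primeOf A v ⊆ (l : Set V) → ∃ x ∈ X, primeOf A v ⊆ (x : Set V) :=
  stmt4_general A v
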